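/- Let k ≥ 4 lines through the origin in ℝ², pairwise distinct, be given. There exists a lattice Λ ⊂ ℝ² meeting each line nontrivially if and only if the cross-ratio of every four of these lines (viewed as points of ℝP¹) is rational. -/

import Mathlib

/-! Choose representatives of three of the lines normalized so that `b₀ + b₁ = v₂` with
`b₀ ∈ ℝ v₀`, `b₁ ∈ ℝ v₁`. In the coordinates of the basis `(b₀, b₁)` the cross-ratio of
`v₀, v₁, v₂, x b₀ + y b₁` is the slope `x / y`, so rational cross-ratios make every line rational
for the lattice `ℤ b₀ + ℤ b₁`. Conversely, the cross-ratio is unchanged by rescaling its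
arguments and is a quotient of `2 × 2` determinants; for lattice vectors these are integer
multiples of the covolume, which cancels. -/

/-- Cross-ratio of four points of ℝP¹ given by representatives in ℝ² \ {0}. -/
noncomputable def crossRatio (P₁ P₂ P₃ P₄ : ℝ × ℝ) : ℝ :=
  ((P₁.1 * P₃.2 - P₁.2 * P₃.1) * (P₂.1 * P₄.2 - P₂.2 * P₄.1)) /
  ((P₁.1 * P₄.2 - P₁.2 * P₄.1) * (P₂.1 * P₃.2 - P₂.2 * P₃.1))

def wedge (P Q : ℝ × ℝ) : ℝ := P.1 * Q.2 - P.2 * Q.1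

@[simp] lemma wedge_self (P : ℝ × ℝ) : wedge P P = 0 := by
  simp only [wedge]; ring

lemma wedge_comm (P Q : ℝ × ℝ) : wedge Q P = -wedge P Q := by
  simp only [wedge]; ring

@[simp] lemma wedge_zero_left (Q : ℝ × ℝ) : wedge 0 Q = 0 := by
  simp [wedge]

@[simp] lemma wedge_zero_right (P : ℝ × ℝ) : wedge P 0 = 0 := by
  simp [wedge]

@[simp] lemma wedge_smul_left (a : ℝ) (P Q : ℝ × ℝ) : wedge (a • P) Q = a * wedge P Q := by
  simp only [wedge, Prod.smul_fst, Prod.smul_snd, smul_eq_mul]; ring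

@[simp] lemma wedge_smul_right (a : ℝ) (P Q : ℝ × ℝ) : wedge P (a • Q) = a * wedge P Q := by
  simp only [wedge, Prod.smul_fst, Prod.smul_snd, smul_eq_mul]; ring

@[simp] lemma wedge_add_left (P P' Q : ℝ × ℝ) : wedge (P + P') Q = wedge P Q + wedge P' Q := by
  simp only [wedge, Prod.fst_add, Prod.snd_add]; ring

@[simp] lemma wedge_add_right (P Q Q' : ℝ × ℝ) : wedge P (Q + Q') = wedge P Q + wedge P Q' := by
  simp only [wedge, Prod.fst_add, Prod.snd_add]; ring

lemma ne_zero_of_wedge_ne_zero {P Q : ℝ × ℝ} (h : wedge P Q ≠ 0) : P ≠ 0 := by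
  rintro rfl
  simp at h

lemma eq_smul_add_smul_of_wedge_ne_zero {B₀ B₁ : ℝ × ℝ} (h : wedge B₀ B₁ ≠ 0) (V : ℝ × ℝ) :
    V = (wedge V B₁ / wedge B₀ B₁) • B₀ + (wedge B₀ V / wedge B₀ B₁) • B₁ := by
  simp only [wedge] at h ⊢
  ext <;> simp only [Prod.fst_add, Prod.snd_add, Prod.smul_fst, Prod.smul_snd, smul_eq_mul] <;>
    rw [div_mul_eq_mul_div, div_mul_eq_mul_div, ← add_div, eq_div_iff h] <;> ring

lemma linearIndependent_of_wedge_ne_zero {P Q : ℝ × ℝ} (h : wedge P Q ≠ 0) :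
    LinearIndependent ℝ ![P, Q] := by
  refine LinearIndependent.pair_iff.mpr fun s t hst => ⟨?_, ?_⟩
  · have := congrArg (wedge · Q) hst
    simpa [h] using this
  · have := congrArg (wedge P) hst
    simpa [h] using this

noncomputable def basisOfWedgeNeZero {P Q : ℝ × ℝ} (h : wedge P Q ≠ 0) :
    Module.Basis (Fin 2) ℝ (ℝ × ℝ) :=
  basisOfLinearIndependentOfCardEqFinrank (linearIndependent_of_wedge_ne_zero h) (by simp)

@[simp] lemma basisOfWedgeNeZero_apply {P Q : ℝ × ℝ} (h : wedge P Q ≠ 0) :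
    ⇑(basisOfWedgeNeZero h) = ![P, Q] := by
  simp [basisOfWedgeNeZero]

lemma exists_wedge_eq_intCast_mul {b : Fin 2 → ℝ × ℝ} {P Q : ℝ × ℝ}
    (hP : P ∈ Submodule.span ℤ (Set.range b)) (hQ : Q ∈ Submodule.span ℤ (Set.range b)) :
    ∃ n : ℤ, wedge P Q = n * wedge (b 0) (b 1) := by
  obtain ⟨c, rfl⟩ := (Submodule.mem_span_range_iff_exists_fun ℤ).mp hP
  obtain ⟨d, rfl⟩ := (Submodule.mem_span_range_iff_exists_fun ℤ).mp hQ
  refine ⟨c 0 * d 1 - c 1 * d 0, ?_⟩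
  simp only [Fin.sum_univ_two, ← Int.cast_smul_eq_zsmul ℝ, wedge_add_left, wedge_add_right,
    wedge_smul_left, wedge_smul_right, wedge_self, wedge_comm (b 1) (b 0)]
  push_cast
  ring

lemma crossRatio_eq_wedge (P₁ P₂ P₃ P₄ : ℝ × ℝ) :
    crossRatio P₁ P₂ P₃ P₄ = wedge P₁ P₃ * wedge P₂ P₄ / (wedge P₁ P₄ * wedge P₂ P₃) :=
  rfl

lemma crossRatio_smul {a b c d : ℝ} (ha : a ≠ 0) (hb : b ≠ 0) (hc : c ≠ 0) (hd : d ≠ 0)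
    (P₁ P₂ P₃ P₄ : ℝ × ℝ) :
    crossRatio (a • P₁) (b • P₂) (c • P₃) (d • P₄) = crossRatio P₁ P₂ P₃ P₄ := by
  simp only [crossRatio_eq_wedge, wedge_smul_left, wedge_smul_right]
  calc _ = (a * b * c * d) * (wedge P₁ P₃ * wedge P₂ P₄) /
        ((a * b * c * d) * (wedge P₁ P₄ * wedge P₂ P₃)) := by ring
    _ = _ := mul_div_mul_left _ _ (by simp [ha, hb, hc, hd])

lemma crossRatio_add_smul_add {B₀ B₁ : ℝ × ℝ} (h : wedge B₀ B₁ ≠ 0) (x y : ℝ) :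
    crossRatio B₀ B₁ (B₀ + B₁) (x • B₀ + y • B₁) = x / y := by
  simp only [crossRatio_eq_wedge, wedge_add_right, wedge_smul_right, wedge_self, wedge_comm B₀ B₁]
  calc _ = x * -(wedge B₀ B₁ * wedge B₀ B₁) / (y * -(wedge B₀ B₁ * wedge B₀ B₁)) := by ring
    _ = x / y := mul_div_mul_right _ _ (by simp [h])

lemma exists_crossRatio_eq_ratCast_of_mem_span {b : Fin 2 → ℝ × ℝ} {P₁ P₂ P₃ P₄ : ℝ × ℝ}
    (h₁ : P₁ ∈ Submodule.span ℤ (Set.range b)) (h₂ : P₂ ∈ Submodule.span ℤ (Set.range b))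
    (h₃ : P₃ ∈ Submodule.span ℤ (Set.range b)) (h₄ : P₄ ∈ Submodule.span ℤ (Set.range b)) :
    ∃ q : ℚ, crossRatio P₁ P₂ P₃ P₄ = q := by
  obtain ⟨n₁₃, e₁₃⟩ := exists_wedge_eq_intCast_mul h₁ h₃
  obtain ⟨n₂₄, e₂₄⟩ := exists_wedge_eq_intCast_mul h₂ h₄
  obtain ⟨n₁₄, e₁₄⟩ := exists_wedge_eq_intCast_mul h₁ h₄
  obtain ⟨n₂₃, e₂₃⟩ := exists_wedge_eq_intCast_mul h₂ h₃
  set D := wedge (b 0) (b 1)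
  rw [crossRatio_eq_wedge, e₁₃, e₂₄, e₁₄, e₂₃]
  by_cases hD : D = 0
  · exact ⟨0, by simp [hD]⟩
  refine ⟨n₁₃ * n₂₄ / (n₁₄ * n₂₃), ?_⟩
  push_cast
  calc _ = n₁₃ * n₂₄ * (D * D) / (n₁₄ * n₂₃ * (D * D)) := by ring
    _ = _ := mul_div_mul_right _ _ (mul_self_ne_zero.mpr hD)

lemma exists_crossRatio_eq_ratCast_of_forall_exists_mem_span {ι : Type*} {b : Fin 2 → ℝ × ℝ}
    {v : ι → ℝ × ℝ}
    (hb : ∀ i, ∃ w : ℝ × ℝ, w ∈ Submodule.span ℤ (Set.range b) ∧ w ≠ 0 ∧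
      w ∈ Submodule.span ℝ {v i}) (i j l m : ι) :
    ∃ q : ℚ, crossRatio (v i) (v j) (v l) (v m) = q := by
  choose w hwL hw0 hwv using hb
  choose t ht using fun i => Submodule.mem_span_singleton.mp (hwv i)
  have ht0 : ∀ i, t i ≠ 0 := fun i h0 => hw0 i (by rw [← ht i, h0, zero_smul])
  rw [← crossRatio_smul (ht0 i) (ht0 j) (ht0 l) (ht0 m), ht, ht, ht, ht]
  exact exists_crossRatio_eq_ratCast_of_mem_span (hwL i) (hwL j) (hwL l) (hwL m)

lemma num_smul_add_den_smul_eq_smul {E : Type*} [AddCommGroup E] [Module ℝ E] (b₀ b₁ : E)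
    {x y : ℝ} (hy : y ≠ 0) {q : ℚ} (hq : x / y = q) :
    q.num • b₀ + (q.den : ℤ) • b₁ = ((q.den : ℝ) / y) • (x • b₀ + y • b₁) := by
  have hx : x = q * y := (div_eq_iff hy).mp hq
  have hnum : ((q.num : ℤ) : ℝ) = q.den * q := by exact_mod_cast q.den_mul_eq_num.symm
  rw [smul_add, smul_smul, smul_smul, ← Int.cast_smul_eq_zsmul ℝ, ← Int.cast_smul_eq_zsmul ℝ,
    hnum, hx]
  congr 2
  · field_simp
  · push_cast
    field_simp

lemma num_smul_add_den_smul_mem_span_singleton {B₀ B₁ V : ℝ × ℝ} (hB : wedge B₀ B₁ ≠ 0)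
    (hV : wedge B₀ V ≠ 0) {q : ℚ} (hq : crossRatio B₀ B₁ (B₀ + B₁) V = q) :
    q.num • B₀ + (q.den : ℤ) • B₁ ≠ 0 ∧ q.num • B₀ + (q.den : ℤ) • B₁ ∈ Submodule.span ℝ {V} := by
  have hV₀ : V ≠ 0 := ne_zero_of_wedge_ne_zero (by rwa [wedge_comm, neg_ne_zero])
  have hVB := eq_smul_add_smul_of_wedge_ne_zero hB V
  set x := wedge V B₁ / wedge B₀ B₁
  set y := wedge B₀ V / wedge B₀ B₁
  have hy : y ≠ 0 := div_ne_zero hV hB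
  have hxy : x / y = q := by rwa [hVB, crossRatio_add_smul_add hB] at hq
  rw [num_smul_add_den_smul_eq_smul _ _ hy hxy, ← hVB]
  exact ⟨smul_ne_zero (div_ne_zero (by exact_mod_cast q.den_nz) hy) hV₀,
    Submodule.smul_mem _ _ (Submodule.mem_span_singleton_self _)⟩

lemma exists_basis_forall_exists_mem_span {ι : Type*} {v : ι → ℝ × ℝ}
    (hdist : ∀ i j, i ≠ j → wedge (v i) (v j) ≠ 0) {i₀ i₁ i₂ : ι}
    (h₀₁ : i₀ ≠ i₁) (h₀₂ : i₀ ≠ i₂) (h₁₂ : i₁ ≠ i₂)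
    (hcr : ∀ i, i ≠ i₀ → i ≠ i₁ → i ≠ i₂ →
      ∃ q : ℚ, crossRatio (v i₀) (v i₁) (v i₂) (v i) = q) :
    ∃ b : Module.Basis (Fin 2) ℝ (ℝ × ℝ), ∀ i, ∃ w : ℝ × ℝ,
      w ∈ Submodule.span ℤ (Set.range b) ∧ w ≠ 0 ∧ w ∈ Submodule.span ℝ {v i} := by
  have hD := hdist i₀ i₁ h₀₁
  set a := wedge (v i₂) (v i₁) / wedge (v i₀) (v i₁)
  set c := wedge (v i₀) (v i₂) / wedge (v i₀) (v i₁)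
  have ha : a ≠ 0 := div_ne_zero (hdist i₂ i₁ h₁₂.symm) hD
  have hc : c ≠ 0 := div_ne_zero (hdist i₀ i₂ h₀₂) hD
  have hsum : a • v i₀ + c • v i₁ = v i₂ := (eq_smul_add_smul_of_wedge_ne_zero hD _).symm
  have hB : wedge (a • v i₀) (c • v i₁) ≠ 0 := by simp [ha, hc, hD]
  set b := basisOfWedgeNeZero hB
  have hb₀ : a • v i₀ ∈ Submodule.span ℤ (Set.range b) := Submodule.subset_span ⟨0, by simp [b]⟩
  have hb₁ : c • v i₁ ∈ Submodule.span ℤ (Set.range b) := Submodule.subset_span ⟨1, by simp [b]⟩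
  refine ⟨b, fun i => ?_⟩
  by_cases hi₀ : i = i₀
  · subst i
    exact ⟨_, hb₀, smul_ne_zero ha (ne_zero_of_wedge_ne_zero hD),
      Submodule.smul_mem _ _ (Submodule.mem_span_singleton_self _)⟩
  by_cases hi₁ : i = i₁
  · subst i
    exact ⟨_, hb₁, smul_ne_zero hc (ne_zero_of_wedge_ne_zero (hdist i₁ i₀ h₀₁.symm)),
      Submodule.smul_mem _ _ (Submodule.mem_span_singleton_self _)⟩
  by_cases hi₂ : i = i₂
  · subst i
    exact ⟨_, hsum ▸ add_mem hb₀ hb₁, ne_zero_of_wedge_ne_zero (hdist i₂ i₀ h₀₂.symm),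
      Submodule.mem_span_singleton_self _⟩
  obtain ⟨q, hq⟩ := hcr i hi₀ hi₁ hi₂
  rw [← crossRatio_smul ha hc one_ne_zero one_ne_zero, one_smul, one_smul, ← hsum] at hq
  obtain ⟨hw₀, hwv⟩ := num_smul_add_den_smul_mem_span_singleton hB
    (by simp [ha, hdist i₀ i (Ne.symm hi₀)]) hq
  exact ⟨_, add_mem (Submodule.smul_mem _ _ hb₀) (Submodule.smul_mem _ _ hb₁), hw₀, hwv⟩

theorem stmt_3_general (k : ℕ) (hk : 4 ≤ k) (v : Fin k → ℝ × ℝ)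
    (hdist : ∀ i j, i ≠ j → (v i).1 * (v j).2 - (v i).2 * (v j).1 ≠ 0) :
    (∃ b : Module.Basis (Fin 2) ℝ (ℝ × ℝ), ∀ i, ∃ w : ℝ × ℝ,
        w ∈ Submodule.span ℤ (Set.range b) ∧ w ≠ 0 ∧
        w ∈ Submodule.span ℝ {v i}) ↔
    (∀ i j l m : Fin k, i ≠ j → i ≠ l → i ≠ m → j ≠ l → j ≠ m → l ≠ m →
        ∃ q : ℚ, crossRatio (v i) (v j) (v l) (v m) = (q : ℝ)) := by
  refine ⟨fun ⟨b, hb⟩ i j l m _ _ _ _ _ _ =>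
    exists_crossRatio_eq_ratCast_of_forall_exists_mem_span hb i j l m, fun hcr => ?_⟩
  let i₀ : Fin k := ⟨0, by omega⟩
  let i₁ : Fin k := ⟨1, by omega⟩
  let i₂ : Fin k := ⟨2, by omega⟩
  have h₀₁ : i₀ ≠ i₁ := by simp [i₀, i₁]
  have h₀₂ : i₀ ≠ i₂ := by simp [i₀, i₂]
  have h₁₂ : i₁ ≠ i₂ := by simp [i₁, i₂]
  exact exists_basis_forall_exists_mem_span hdist h₀₁ h₀₂ h₁₂ fun i hi₀ hi₁ hi₂ =>
    hcr i₀ i₁ i₂ i h₀₁ h₀₂ (Ne.symm hi₀) h₁₂ (Ne.symm hi₁) (Ne.symm hi₂)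

/-- Given `k ≥ 4` pairwise distinct lines through the origin of ℝ²
(spanned by nonzero vectors `v i`), there is a lattice meeting each line
nontrivially iff the cross-ratio of every four of the lines is rational. -/
theorem stmt_3 (k : ℕ) (hk : 4 ≤ k) (v : Fin k → ℝ × ℝ) (hne : ∀ i, v i ≠ 0)
    (hdist : ∀ i j, i ≠ j → (v i).1 * (v j).2 - (v i).2 * (v j).1 ≠ 0) :
    (∃ b : Module.Basis (Fin 2) ℝ (ℝ × ℝ), ∀ i, ∃ w : ℝ × ℝ,
        w ∈ Submodule.span ℤ (Set.range b) ∧ w ≠ 0 ∧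
        w ∈ Submodule.span ℝ {v i}) ↔
    (∀ i j l m : Fin k, i ≠ j → i ≠ l → i ≠ m → j ≠ l → j ≠ m → l ≠ m →
        ∃ q : ℚ, crossRatio (v i) (v j) (v l) (v m) = (q : ℝ)) :=
  stmt_3_general k hk v hdist
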